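/- arXiv:1204.4526 — 8 statements merged into one kernel-verified Lean document; each statement's English description precedes it below -/
import Mathlib

section
/- For integers a > 0 and 0 ≤ b ≤ a, the coefficients satisfy c·m_{a,b} = (a-b)·m_{a-1,b} − b·m_{a-1,b-1} + E, where E = −c/(e^c−1) if b = 0, E = c·e^c/(e^c−1) if a = b, and E = 0 otherwise (with the convention m_{a,b} = 0 if a or b is negative). -/
open MeasureTheory Real Finset

noncomputable def mcoef (c : ℝ) (a b : ℤ) : ℝ :=
  if a < 0 ∨ b < 0 then 0
  else ∫ p in (0:ℝ)..1,
    (c * Real.exp (c * p) / (Real.exp c - 1)) * p ^ b.toNat * (1 - p) ^ (a - b).toNat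

noncomputable def harm (k : ℕ) : ℝ := ∑ t ∈ Finset.range k, (1 : ℝ) / (t + 1)

noncomputable def gfun (c : ℝ) {U : Type*} [DecidableEq U] (f : Finset U → ℝ)
    (A : Finset U) : ℝ :=
  ∑ B ∈ A.powerset, mcoef c ((A.card : ℤ) - 1) ((B.card : ℤ) - 1) * f B

/-! Writing `κ = c / (e^c - 1)`, every `m_{a,b}` is `κ` times `∫₀¹ e^{cp} p^b (1-p)^{a-b} dp`. The
recursion is the fundamental theorem of calculus applied to `e^{cp} p^m (1-p)^n`, whose values at
`p = 0` and `p = 1` produce the boundary term `E`. -/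

noncomputable def expBetaIntegral (c : ℝ) (m n : ℕ) : ℝ :=
  ∫ p in (0 : ℝ)..1, exp (c * p) * p ^ m * (1 - p) ^ n

lemma hasDerivAt_exp_mul_pow_mul_one_sub_pow (c : ℝ) (m n : ℕ) (p : ℝ) :
    HasDerivAt (fun p => exp (c * p) * p ^ m * (1 - p) ^ n)
      (c * (exp (c * p) * p ^ m * (1 - p) ^ n) + m * (exp (c * p) * p ^ (m - 1) * (1 - p) ^ n)
        - n * (exp (c * p) * p ^ m * (1 - p) ^ (n - 1))) p := by
  have hexp : HasDerivAt (fun p : ℝ => exp (c * p)) (exp (c * p) * c) p := by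
    simpa using ((hasDerivAt_id p).const_mul c).exp
  have hsub : HasDerivAt (fun p : ℝ => (1 - p) ^ n) (n * (1 - p) ^ (n - 1) * (-1)) p :=
    (hasDerivAt_pow n (1 - p)).comp p ((hasDerivAt_id p).const_sub 1)
  have hprod : HasDerivAt (fun p => exp (c * p) * p ^ m * (1 - p) ^ n)
      ((exp (c * p) * c * p ^ m + exp (c * p) * (m * p ^ (m - 1))) * (1 - p) ^ n
        + exp (c * p) * p ^ m * (n * (1 - p) ^ (n - 1) * (-1))) p :=
    (hexp.mul (hasDerivAt_pow m p)).mul hsub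
  convert hprod using 1
  ring

/-- When `n = 0` (resp. `m = 0`) the truncated `n - 1` (resp. `m - 1`) is harmless: its term has
coefficient zero. -/
lemma mul_expBetaIntegral (c : ℝ) (m n : ℕ) :
    c * expBetaIntegral c m n =
      n * expBetaIntegral c m (n - 1) - m * expBetaIntegral c (m - 1) n +
        (exp c * (if n = 0 then 1 else 0) - (if m = 0 then 1 else 0)) := by
  have hint : ∀ k l : ℕ,
      IntervalIntegrable (fun p : ℝ => exp (c * p) * p ^ k * (1 - p) ^ l) volume 0 1 :=
    fun k l => (by fun_prop : Continuous _).intervalIntegrable 0 1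
  have hsum := (((hint m n).const_mul c).add ((hint (m - 1) n).const_mul (m : ℝ))).sub
    ((hint m (n - 1)).const_mul (n : ℝ))
  have hFTC := intervalIntegral.integral_eq_sub_of_hasDerivAt
    (fun p _ => hasDerivAt_exp_mul_pow_mul_one_sub_pow c m n p) hsum
  rw [intervalIntegral.integral_sub (((hint m n).const_mul c).add ((hint (m - 1) n).const_mul _))
      ((hint m (n - 1)).const_mul _),
    intervalIntegral.integral_add ((hint m n).const_mul c) ((hint (m - 1) n).const_mul _),
    intervalIntegral.integral_const_mul, intervalIntegral.integral_const_mul,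
    intervalIntegral.integral_const_mul] at hFTC
  have hat0 : exp (c * 0) * (0 : ℝ) ^ m * (1 - 0) ^ n = if m = 0 then 1 else 0 := by
    simp [zero_pow_eq]
  have hat1 : exp (c * 1) * (1 : ℝ) ^ m * (1 - 1) ^ n = exp c * if n = 0 then 1 else 0 := by
    simp [zero_pow_eq]
  rw [hat0, hat1] at hFTC
  unfold expBetaIntegral
  linarith

lemma mcoef_natCast_add (c : ℝ) (m n : ℕ) :
    mcoef c (m + n) m = c / (exp c - 1) * expBetaIntegral c m n := by
  rw [mcoef, if_neg (by omega), expBetaIntegral, ← intervalIntegral.integral_const_mul]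
  refine intervalIntegral.integral_congr fun p _ => ?_
  simp only [Int.toNat_natCast, add_sub_cancel_left]
  ring

lemma natCast_mul_mcoef_sub_one_left (c : ℝ) (m n : ℕ) :
    (n : ℝ) * mcoef c (m + n - 1) m = c / (exp c - 1) * (n * expBetaIntegral c m (n - 1)) := by
  cases n with
  | zero => simp
  | succ n =>
    rw [show ((m : ℤ) + (n + 1 : ℕ) - 1) = m + n by push_cast; ring, mcoef_natCast_add]
    simp only [Nat.add_sub_cancel]
    ring

lemma natCast_mul_mcoef_sub_one_sub_one (c : ℝ) (m n : ℕ) :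
    (m : ℝ) * mcoef c (m + n - 1) (m - 1) =
      c / (exp c - 1) * (m * expBetaIntegral c (m - 1) n) := by
  cases m with
  | zero => simp
  | succ m =>
    rw [show ((m + 1 : ℕ) : ℤ) + n - 1 = m + n by push_cast; ring,
      show ((m + 1 : ℕ) : ℤ) - 1 = m by push_cast; ring, mcoef_natCast_add]
    simp only [Nat.add_sub_cancel]
    ring

theorem stmt_1_general (c : ℝ) (a b : ℤ)
    (ha : 0 < a) (hb0 : 0 ≤ b) (hba : b ≤ a) :
    c * mcoef c a b =
      (a - b : ℝ) * mcoef c (a - 1) b - (b : ℝ) * mcoef c (a - 1) (b - 1) +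
      (if b = 0 then -c / (Real.exp c - 1)
       else if a = b then c * Real.exp c / (Real.exp c - 1)
       else 0) := by
  lift b to ℕ using hb0
  obtain ⟨n, rfl⟩ : ∃ n : ℕ, a = b + n := ⟨(a - b).toNat, by omega⟩
  have hboundary : (if (b : ℤ) = 0 then -c / (exp c - 1)
      else if (b : ℤ) + n = b then c * exp c / (exp c - 1) else 0) =
      c / (exp c - 1) * (exp c * (if n = 0 then 1 else 0) - (if b = 0 then 1 else 0)) := by
    split_ifs <;> first | omega | ring
  push_cast
  rw [add_sub_cancel_left, natCast_mul_mcoef_sub_one_left, natCast_mul_mcoef_sub_one_sub_one,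
    hboundary, mcoef_natCast_add]
  linear_combination c / (exp c - 1) * mul_expBetaIntegral c b n

theorem stmt_1 (c : ℝ) (hc0 : 0 < c) (hc1 : c ≤ 1) (a b : ℤ)
    (ha : 0 < a) (hb0 : 0 ≤ b) (hba : b ≤ a) :
    c * mcoef c a b =
      (a - b : ℝ) * mcoef c (a - 1) b - (b : ℝ) * mcoef c (a - 1) (b - 1) +
      (if b = 0 then -c / (Real.exp c - 1)
       else if a = b then c * Real.exp c / (Real.exp c - 1)
       else 0) :=
  stmt_1_general c a b ha hb0 hba
end

section
/- For any finite set A, the sum over all subsets B ⊆ A of m_{|A|−1, |B|−1} is at most (c e^c/(e^c−1)) · H_{|A|}, where H_k = ∑_{t=1}^k 1/t is the k-th harmonic number. -/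
open MeasureTheory Real Finset

/-!
Grouping the subsets `B` by their size `k`, the sum is `∫₀¹ w(p) G_n(p) dp`, where `w` is the
density `c e^{cp}/(e^c - 1)` in `mcoef` and `G_n(p) = ∑_{k ≥ 1} C(n,k) p^{k-1} (1-p)^{n-k}`.
By the binomial theorem `p G_n(p) = 1 - (1-p)^n`, so `G_n(p) = ∑_{j<n} (1-p)^j`, whose integral
over `[0,1]` is `H_n`. Since `w` is increasing, `w ≤ w(1) = c e^c/(e^c - 1)` on `[0,1]`.
-/

noncomputable def expDensity (c p : ℝ) : ℝ := c * exp (c * p) / (exp c - 1)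

lemma expDensity_le {c p : ℝ} (hc : 0 ≤ c) (hp : p ≤ 1) :
    expDensity c p ≤ c * exp c / (exp c - 1) := by
  have hE : 0 ≤ exp c - 1 := sub_nonneg.mpr (one_le_exp hc)
  unfold expDensity
  gcongr
  nlinarith

lemma mcoef_natCast_sub_one_succ (c : ℝ) {n k : ℕ} (hk : k < n) :
    mcoef c ((n : ℤ) - 1) (((k + 1 : ℕ) : ℤ) - 1) =
      ∫ p in (0:ℝ)..1, expDensity c p * p ^ k * (1 - p) ^ (n - 1 - k) := by
  rw [mcoef, if_neg (by omega)]
  have hb : (((k + 1 : ℕ) : ℤ) - 1).toNat = k := by omega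
  have hab : ((n : ℤ) - 1 - (((k + 1 : ℕ) : ℤ) - 1)).toNat = n - 1 - k := by omega
  rw [hb, hab]
  rfl

lemma mul_sum_choose_succ_add_pow {R : Type*} [CommSemiring R] (x y : R) (n : ℕ) :
    x * ∑ i ∈ range n, (n.choose (i + 1) : R) * x ^ i * y ^ (n - 1 - i) + y ^ n = (x + y) ^ n := by
  rw [add_pow, sum_range_succ', mul_sum]
  simp only [pow_zero, one_mul, Nat.choose_zero_right, Nat.cast_one, mul_one, Nat.sub_zero]
  congr 1
  refine sum_congr rfl fun i hi => ?_
  rw [show n - (i + 1) = n - 1 - i by omega]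
  ring

lemma sum_choose_succ_mul_pow_eq_geom_sum {p : ℝ} (hp : p ≠ 0) (n : ℕ) :
    ∑ i ∈ range n, (n.choose (i + 1) : ℝ) * p ^ i * (1 - p) ^ (n - 1 - i) =
      ∑ j ∈ range n, (1 - p) ^ j := by
  refine mul_left_cancel₀ hp ?_
  have hbinom := mul_sum_choose_succ_add_pow p (1 - p) n
  have hgeom := mul_neg_geom_sum (1 - p) n
  rw [add_sub_cancel, one_pow] at hbinom
  rw [sub_sub_cancel] at hgeom
  linarith

lemma integral_one_sub_pow (j : ℕ) : ∫ p in (0:ℝ)..1, (1 - p) ^ j = 1 / (j + 1) := by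
  rw [intervalIntegral.integral_comp_sub_left (fun u : ℝ => u ^ j), sub_self, sub_zero,
    integral_pow]
  norm_num

lemma integral_geom_sum_one_sub (n : ℕ) :
    ∫ p in (0:ℝ)..1, ∑ j ∈ range n, (1 - p) ^ j = harm n := by
  rw [intervalIntegral.integral_finsetSum fun j _ => by
    apply Continuous.intervalIntegrable; fun_prop]
  exact sum_congr rfl fun j _ => integral_one_sub_pow j

lemma sum_powerset_mcoef_eq_integral (c : ℝ) {α : Type*} [DecidableEq α] (A : Finset α) :
    ∑ B ∈ A.powerset, mcoef c ((A.card : ℤ) - 1) ((B.card : ℤ) - 1) =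
      ∫ p in (0:ℝ)..1, expDensity c p *
        ∑ i ∈ range A.card, (A.card.choose (i + 1) : ℝ) * p ^ i * (1 - p) ^ (A.card - 1 - i) := by
  set n := A.card
  rw [sum_powerset_apply_card (fun k => mcoef c ((n : ℤ) - 1) ((k : ℤ) - 1)),
    sum_range_succ']
  have hempty : mcoef c ((n : ℤ) - 1) (((0 : ℕ) : ℤ) - 1) = 0 := by simp [mcoef]
  simp only [hempty, smul_zero, add_zero, nsmul_eq_mul]
  simp_rw [mul_sum]
  rw [intervalIntegral.integral_finsetSum fun i _ => by
    apply Continuous.intervalIntegrable; unfold expDensity; fun_prop]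
  refine sum_congr rfl fun i hi => ?_
  rw [mcoef_natCast_sub_one_succ c (mem_range.mp hi), ← intervalIntegral.integral_const_mul]
  congr 1 with p
  ring

theorem stmt_2_general (c : ℝ) (hc0 : 0 < c) {α : Type*} [DecidableEq α]
    (A : Finset α) :
    ∑ B ∈ A.powerset, mcoef c ((A.card : ℤ) - 1) ((B.card : ℤ) - 1) ≤
      c * Real.exp c / (Real.exp c - 1) * harm A.card := by
  rw [sum_powerset_mcoef_eq_integral, ← integral_geom_sum_one_sub,
    ← intervalIntegral.integral_const_mul]
  refine intervalIntegral.integral_mono_on_of_le_Ioo zero_le_one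
    (by apply Continuous.intervalIntegrable; unfold expDensity; fun_prop)
    (by apply Continuous.intervalIntegrable; fun_prop) fun p hp => ?_
  rw [sum_choose_succ_mul_pow_eq_geom_sum hp.1.ne']
  have hgeom_nonneg : 0 ≤ ∑ j ∈ range A.card, (1 - p) ^ j :=
    sum_nonneg fun j _ => pow_nonneg (by linarith [hp.2]) j
  exact mul_le_mul_of_nonneg_right (expDensity_le hc0.le hp.2.le) hgeom_nonneg

theorem stmt_2 (c : ℝ) (hc0 : 0 < c) (hc1 : c ≤ 1) {α : Type*} [DecidableEq α]
    (A : Finset α) :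
    ∑ B ∈ A.powerset, mcoef c ((A.card : ℤ) - 1) ((B.card : ℤ) - 1) ≤
      c * Real.exp c / (Real.exp c - 1) * harm A.card :=
  stmt_2_general c hc0 A
end

section
/- If f : 2^U → ℝ is normalized (f(∅)=0), monotone, submodular, and has curvature at most c, then the function g defined by g(A) = ∑_{B ⊆ A} m_{|A|−1,|B|−1} f(B) satisfies the marginal identity g(A + x) − g(A) = ∑_{B ⊆ A} m_{|A|,|B|} (f(B + x) − f(B)) for all A ⊆ U and x ∉ A. -/
open MeasureTheory Real Finset

lemma mcoef_cont (c : ℝ) (a b : ℕ) :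
    Continuous fun p : ℝ => (c * Real.exp (c * p) / (Real.exp c - 1)) * p ^ a * (1 - p) ^ b := by
  apply Continuous.mul
  apply Continuous.mul
  · exact ((continuous_const.mul ((continuous_const.mul continuous_id).rexp)).div_const _)
  · exact continuous_pow a
  · exact (continuous_const.sub continuous_id).pow b

private def k' (m : ℕ) : ℕ := m + 1

lemma mcoef_key (c : ℝ) (n k : ℕ) (hk : 1 ≤ k) (hkn : k ≤ n) :
    mcoef c (n : ℤ) ((k : ℤ) - 1) - mcoef c ((n : ℤ) - 1) ((k : ℤ) - 1)
      = - mcoef c (n : ℤ) (k : ℤ) := by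
  obtain ⟨m, rfl⟩ : ∃ m, k = m + 1 := ⟨k - 1, by omega⟩
  have h1 : ¬((n : ℤ) < 0 ∨ ((m + 1 : ℕ) : ℤ) - 1 < 0) := by omega
  have h2 : ¬((n : ℤ) - 1 < 0 ∨ ((m + 1 : ℕ) : ℤ) - 1 < 0) := by omega
  have h3 : ¬((n : ℤ) < 0 ∨ ((m + 1 : ℕ) : ℤ) < 0) := by omega
  have e1 : (((m + 1 : ℕ) : ℤ) - 1).toNat = m := by omega
  have e2 : ((n : ℤ) - (((m + 1 : ℕ) : ℤ) - 1)).toNat = (n - k' m) + 1 := by simp [k']; omega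
  have e3 : ((n : ℤ) - 1 - (((m + 1 : ℕ) : ℤ) - 1)).toNat = n - k' m := by simp [k']; omega
  have e4 : (((m + 1 : ℕ) : ℤ)).toNat = m + 1 := by omega
  have e5 : ((n : ℤ) - ((m + 1 : ℕ) : ℤ)).toNat = n - k' m := by simp [k']; omega
  rw [mcoef, mcoef, mcoef, if_neg h1, if_neg h2, if_neg h3, e1, e2, e3, e4, e5]
  rw [← intervalIntegral.integral_sub ((mcoef_cont c _ _).intervalIntegrable 0 1)
    ((mcoef_cont c _ _).intervalIntegrable 0 1), ← intervalIntegral.integral_neg]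
  apply intervalIntegral.integral_congr
  intro p _
  simp only
  rw [pow_succ, pow_succ]
  ring

theorem stmt_5 (c : ℝ) (hc0 : 0 < c) (hc1 : c ≤ 1) {U : Type*} [Fintype U] [DecidableEq U]
    (f : Finset U → ℝ)
    (hnorm : f ∅ = 0)
    (hmono : ∀ A B : Finset U, A ⊆ B → f A ≤ f B)
    (hsub : ∀ A B : Finset U, f A + f B ≥ f (A ∪ B) + f (A ∩ B))
    (hcurv : ∀ A B : Finset U, Disjoint A B → f (A ∪ B) ≥ f A + (1 - c) * f B)
    (A : Finset U) (x : U) (hx : x ∉ A) :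
    gfun c f (insert x A) - gfun c f A =
      ∑ B ∈ A.powerset, mcoef c (A.card : ℤ) (B.card : ℤ) * (f (insert x B) - f B) := by
  rw [gfun, gfun, Finset.sum_powerset_insert hx]
  have hcardA : ((insert x A).card : ℤ) - 1 = (A.card : ℤ) := by
    rw [Finset.card_insert_of_notMem hx]; push_cast; ring
  have hterm2 : ∀ B ∈ A.powerset,
      mcoef c (((insert x A).card : ℤ) - 1) (((insert x B).card : ℤ) - 1) * f (insert x B)
        = mcoef c (A.card : ℤ) (B.card : ℤ) * f (insert x B) := by
    intro B hB
    have hxB : x ∉ B := fun h => hx (Finset.mem_powerset.mp hB h)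
    rw [hcardA, Finset.card_insert_of_notMem hxB]
    push_cast; ring_nf
  rw [Finset.sum_congr rfl hterm2]
  have hmain : ∀ B ∈ A.powerset,
      mcoef c (((insert x A).card : ℤ) - 1) ((B.card : ℤ) - 1) * f B
        - mcoef c ((A.card : ℤ) - 1) ((B.card : ℤ) - 1) * f B
        = - (mcoef c (A.card : ℤ) (B.card : ℤ) * f B) := by
    intro B hB
    rcases eq_or_ne B ∅ with rfl | hBne
    · simp [hnorm]
    · have hk : 1 ≤ B.card := Finset.card_pos.mpr (Finset.nonempty_iff_ne_empty.mpr hBne)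
      have hkn : B.card ≤ A.card := Finset.card_le_card (Finset.mem_powerset.mp hB)
      rw [hcardA, ← sub_mul, mcoef_key c A.card B.card hk hkn]
      ring
  have := Finset.sum_congr rfl hmain
  rw [Finset.sum_sub_distrib] at this
  calc (∑ B ∈ A.powerset, mcoef c (((insert x A).card : ℤ) - 1) ((B.card : ℤ) - 1) * f B
        + ∑ B ∈ A.powerset, mcoef c (A.card : ℤ) (B.card : ℤ) * f (insert x B))
      - ∑ B ∈ A.powerset, mcoef c ((A.card : ℤ) - 1) ((B.card : ℤ) - 1) * f B
      = (∑ B ∈ A.powerset, mcoef c (((insert x A).card : ℤ) - 1) ((B.card : ℤ) - 1) * f B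
        - ∑ B ∈ A.powerset, mcoef c ((A.card : ℤ) - 1) ((B.card : ℤ) - 1) * f B)
        + ∑ B ∈ A.powerset, mcoef c (A.card : ℤ) (B.card : ℤ) * f (insert x B) := by ring
    _ = ∑ B ∈ A.powerset, (- (mcoef c (A.card : ℤ) (B.card : ℤ) * f B))
        + ∑ B ∈ A.powerset, mcoef c (A.card : ℤ) (B.card : ℤ) * f (insert x B) := by rw [this]
    _ = ∑ B ∈ A.powerset, mcoef c (A.card : ℤ) (B.card : ℤ) * (f (insert x B) - f B) := by
        rw [← Finset.sum_add_distrib]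
        apply Finset.sum_congr rfl
        intro B _; ring
end

section
/- If f : 2^U → ℝ is normalized, monotone, and submodular, then g(A) = ∑_{B ⊆ A} m_{|A|−1,|B|−1} f(B) is also normalized, monotone, and submodular. -/
open MeasureTheory Real Finset

set_option linter.unusedSectionVars false

namespace SubAux

noncomputable def w (c p : ℝ) : ℝ := c * Real.exp (c * p) / (Real.exp c - 1)

variable {U : Type*} [DecidableEq U]

noncomputable def Q (f : Finset U → ℝ) (A : Finset U) (p : ℝ) : ℝ :=
  ∑ B ∈ A.powerset, f B * p ^ (B.card - 1) * (1 - p) ^ (A.card - B.card)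

noncomputable def P (f : Finset U → ℝ) (A : Finset U) (p : ℝ) : ℝ :=
  ∑ B ∈ A.powerset, f B * p ^ B.card * (1 - p) ^ (A.card - B.card)

lemma contQ (f : Finset U → ℝ) (A : Finset U) :
    Continuous (fun p => w c p * Q f A p) := by
  unfold w Q
  fun_prop

lemma w_nonneg {c : ℝ} (hc : 0 < c) (p : ℝ) : 0 ≤ w c p := by
  unfold w
  have h1 : (1:ℝ) < Real.exp c := by
    simpa using Real.exp_lt_exp.mpr hc
  have h2 : (0:ℝ) < Real.exp c - 1 := by linarith
  positivity

lemma sum_pow (T : Finset U) (p : ℝ) :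
    ∑ S ∈ T.powerset, p ^ S.card * (1 - p) ^ (T.card - S.card) = 1 := by
  have h := Finset.prod_add (fun _ : U => p) (fun _ : U => (1 - p)) T
  simp only [Finset.prod_const] at h
  have h2 : ∀ S ∈ T.powerset, p ^ S.card * (1-p) ^ (T \ S).card
      = p ^ S.card * (1 - p) ^ (T.card - S.card) := by
    intro S hS
    rw [Finset.card_sdiff_of_subset (Finset.mem_powerset.mp hS)]
  rw [Finset.sum_congr rfl h2] at h
  rw [← h]
  norm_num

lemma pQ (f : Finset U → ℝ) (hnorm : f ∅ = 0) (A : Finset U) (p : ℝ) :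
    p * Q f A p = P f A p := by
  unfold Q P
  rw [Finset.mul_sum]
  refine Finset.sum_congr rfl fun B hB => ?_
  rcases Finset.eq_empty_or_nonempty B with rfl | hBne
  · simp [hnorm]
  · have hb : 1 ≤ B.card := Finset.card_pos.mpr hBne
    have : p ^ B.card = p * p ^ (B.card - 1) := by
      rw [← pow_succ']
      congr 1
      omega
    rw [this]; ring

lemma Q0 (f : Finset U → ℝ) (hnorm : f ∅ = 0) (A : Finset U) :
    Q f A 0 = ∑ x ∈ A, f {x} := by
  unfold Q
  have h : ∀ B ∈ A.powerset, f B * (0:ℝ) ^ (B.card - 1) * (1 - 0) ^ (A.card - B.card)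
      = if B.card = 1 then f B else 0 := by
    intro B _
    rcases Nat.lt_or_ge B.card 2 with h2 | h2
    · interval_cases h1 : B.card
      · have : B = ∅ := Finset.card_eq_zero.mp h1
        simp [this, hnorm]
      · simp [h1]
    · have : B.card - 1 ≠ 0 := by omega
      rw [zero_pow this, if_neg (by omega)]
      ring
  rw [Finset.sum_congr rfl h, ← Finset.sum_filter]
  rw [← Finset.powersetCard_eq_filter, Finset.powersetCard_one, Finset.sum_map]
  rfl


section FT
variable [Fintype U]

lemma P_expand (f : Finset U → ℝ) (A : Finset U) (p : ℝ) :
    P f A p = ∑ R ∈ (Finset.univ : Finset U).powerset,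
      p ^ R.card * (1 - p) ^ (Fintype.card U - R.card) * f (A ∩ R) := by
  have hmaps : ∀ R ∈ (Finset.univ : Finset U).powerset, A ∩ R ∈ A.powerset :=
    fun R _ => Finset.mem_powerset.mpr Finset.inter_subset_left
  rw [← Finset.sum_fiberwise_of_maps_to hmaps]
  unfold P
  refine Finset.sum_congr rfl fun B hB => ?_
  have hBA : B ⊆ A := Finset.mem_powerset.mp hB
  have hcard : B.card ≤ A.card := Finset.card_le_card hBA
  have hAcard : A.card ≤ Fintype.card U := Finset.card_le_univ A
  have hUA : ((Finset.univ : Finset U) \ A).card = Fintype.card U - A.card := by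
    rw [Finset.card_sdiff_of_subset (Finset.subset_univ A), Finset.card_univ]
  have key : ∑ R ∈ (Finset.univ : Finset U).powerset with A ∩ R = B,
      p ^ R.card * (1 - p) ^ (Fintype.card U - R.card) * f (A ∩ R)
      = ∑ S ∈ ((Finset.univ : Finset U) \ A).powerset,
        (f B * p ^ B.card * (1 - p) ^ (A.card - B.card)) *
          (p ^ S.card * (1 - p) ^ (((Finset.univ : Finset U) \ A).card - S.card)) := by
    refine Finset.sum_nbij' (fun R => R \ A) (fun S => B ∪ S) ?_ ?_ ?_ ?_ ?_
    · intro R hR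
      exact Finset.mem_powerset.mpr
        (Finset.sdiff_subset_sdiff (Finset.subset_univ R) (Finset.Subset.refl A))
    · intro S hS
      have hS' := Finset.mem_powerset.mp hS
      have hdisj : A ∩ S = ∅ := by
        apply Finset.eq_empty_of_forall_notMem
        intro x hx
        have h1 := Finset.mem_of_mem_inter_left hx
        have h2 := hS' (Finset.mem_of_mem_inter_right hx)
        simp only [Finset.mem_sdiff] at h2
        exact h2.2 h1
      simp only [Finset.mem_filter, Finset.mem_powerset]
      refine ⟨Finset.subset_univ _, ?_⟩
      rw [Finset.inter_union_distrib_left, Finset.inter_eq_right.mpr hBA, hdisj,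
        Finset.union_empty]
    · intro R hR
      simp only [Finset.mem_filter] at hR
      show B ∪ R \ A = R
      rw [← hR.2, Finset.inter_comm, Finset.union_comm]
      exact Finset.sdiff_union_inter R A
    · intro S hS
      have hS' := Finset.mem_powerset.mp hS
      show (B ∪ S) \ A = S
      rw [Finset.union_sdiff_distrib, Finset.sdiff_eq_empty_iff_subset.mpr hBA,
        Finset.empty_union]
      apply Finset.sdiff_eq_self_of_disjoint
      exact Finset.disjoint_left.mpr fun x hx hxA => by
        have := hS' hx; simp only [Finset.mem_sdiff] at this; exact this.2 hxA
    · intro R hR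
      simp only [Finset.mem_filter] at hR
      have hcardR : B.card + (R \ A).card = R.card := by
        rw [← hR.2]
        rw [Finset.inter_comm]
        exact Finset.card_inter_add_card_sdiff R A
      have hsle : (R \ A).card ≤ ((Finset.univ : Finset U) \ A).card :=
        Finset.card_le_card (Finset.sdiff_subset_sdiff (Finset.subset_univ R) (Finset.Subset.refl A))
      have hRle : R.card ≤ Fintype.card U := Finset.card_le_univ R
      have hexp : Fintype.card U - R.card
          = (A.card - B.card) + (((Finset.univ : Finset U) \ A).card - (R \ A).card) := by
        omega
      rw [hR.2, hexp, pow_add, hcardR.symm, pow_add]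
      ring
  rw [key, ← Finset.mul_sum, sum_pow, mul_one]

lemma P_mono {p : ℝ} (hp : p ∈ Set.Icc (0:ℝ) 1) (f : Finset U → ℝ)
    (hmono : ∀ A B : Finset U, A ⊆ B → f A ≤ f B)
    {A B : Finset U} (hAB : A ⊆ B) : P f A p ≤ P f B p := by
  rw [P_expand, P_expand]
  refine Finset.sum_le_sum fun R _ => ?_
  have hw : 0 ≤ p ^ R.card * (1 - p) ^ (Fintype.card U - R.card) := by
    obtain ⟨hp0, hp1⟩ := hp
    have h1 : (0:ℝ) ≤ 1 - p := by linarith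
    positivity
  exact mul_le_mul_of_nonneg_left
    (hmono _ _ (Finset.inter_subset_inter hAB (Finset.Subset.refl R))) hw

lemma P_sub {p : ℝ} (hp : p ∈ Set.Icc (0:ℝ) 1) (f : Finset U → ℝ)
    (hsub : ∀ A B : Finset U, f A + f B ≥ f (A ∪ B) + f (A ∩ B))
    (A B : Finset U) : P f (A ∪ B) p + P f (A ∩ B) p ≤ P f A p + P f B p := by
  rw [P_expand, P_expand, P_expand, P_expand, ← Finset.sum_add_distrib,
    ← Finset.sum_add_distrib]
  refine Finset.sum_le_sum fun R _ => ?_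
  rw [← mul_add, ← mul_add]
  have hw : 0 ≤ p ^ R.card * (1 - p) ^ (Fintype.card U - R.card) := by
    obtain ⟨hp0, hp1⟩ := hp
    have h1 : (0:ℝ) ≤ 1 - p := by linarith
    positivity
  apply mul_le_mul_of_nonneg_left _ hw
  rw [Finset.union_inter_distrib_right, Finset.inter_inter_distrib_right]
  exact hsub (A ∩ R) (B ∩ R)

lemma fnonneg (f : Finset U → ℝ) (hnorm : f ∅ = 0)
    (hmono : ∀ A B : Finset U, A ⊆ B → f A ≤ f B) (S : Finset U) : 0 ≤ f S := by
  rw [← hnorm]; exact hmono _ _ (Finset.empty_subset S)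

lemma Q_mono {p : ℝ} (hp : p ∈ Set.Icc (0:ℝ) 1) (f : Finset U → ℝ) (hnorm : f ∅ = 0)
    (hmono : ∀ A B : Finset U, A ⊆ B → f A ≤ f B)
    {A B : Finset U} (hAB : A ⊆ B) : Q f A p ≤ Q f B p := by
  rcases eq_or_lt_of_le hp.1 with h0 | h0
  · rw [← h0, Q0 f hnorm, Q0 f hnorm]
    exact Finset.sum_le_sum_of_subset_of_nonneg hAB
      (fun x _ _ => fnonneg f hnorm hmono {x})
  · have := P_mono hp f hmono hAB
    rw [← pQ f hnorm A p, ← pQ f hnorm B p] at this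
    exact le_of_mul_le_mul_left this h0

lemma Q_sub {p : ℝ} (hp : p ∈ Set.Icc (0:ℝ) 1) (f : Finset U → ℝ) (hnorm : f ∅ = 0)
    (hsub : ∀ A B : Finset U, f A + f B ≥ f (A ∪ B) + f (A ∩ B))
    (A B : Finset U) : Q f (A ∪ B) p + Q f (A ∩ B) p ≤ Q f A p + Q f B p := by
  rcases eq_or_lt_of_le hp.1 with h0 | h0
  · rw [← h0, Q0 f hnorm, Q0 f hnorm, Q0 f hnorm, Q0 f hnorm]
    rw [Finset.sum_union_inter]
  · have := P_sub hp f hsub A B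
    rw [← pQ f hnorm _ p, ← pQ f hnorm _ p, ← pQ f hnorm _ p, ← pQ f hnorm _ p,
      ← mul_add, ← mul_add] at this
    exact le_of_mul_le_mul_left this h0

lemma gfun_eq (c : ℝ) (f : Finset U → ℝ) (hnorm : f ∅ = 0) (A : Finset U) :
    gfun c f A = ∫ p in (0:ℝ)..1, w c p * Q f A p := by
  unfold gfun Q
  simp_rw [Finset.mul_sum]
  rw [intervalIntegral.integral_finset_sum]
  · refine Finset.sum_congr rfl fun B hB => ?_
    rcases Finset.eq_empty_or_nonempty B with rfl | hBne
    · simp [hnorm]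
    · have hb : 1 ≤ B.card := Finset.card_pos.mpr hBne
      have hBA : B ⊆ A := Finset.mem_powerset.mp hB
      have hba : B.card ≤ A.card := Finset.card_le_card hBA
      have ha : 1 ≤ A.card := le_trans hb hba
      rw [mcoef, if_neg (by push_neg; omega)]
      have h1 : (((A.card : ℤ) - 1) - ((B.card : ℤ) - 1)).toNat = A.card - B.card := by omega
      have h2 : ((B.card : ℤ) - 1).toNat = B.card - 1 := by omega
      rw [h1, h2, ← intervalIntegral.integral_mul_const]
      refine intervalIntegral.integral_congr fun p _ => ?_
      unfold w; ring
  · intro B hB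
    apply Continuous.intervalIntegrable
    unfold w
    fun_prop

end FT

end SubAux
theorem stmt_7 (c : ℝ) (hc0 : 0 < c) (hc1 : c ≤ 1) {U : Type*} [Fintype U] [DecidableEq U]
    (f : Finset U → ℝ)
    (hnorm : f ∅ = 0)
    (hmono : ∀ A B : Finset U, A ⊆ B → f A ≤ f B)
    (hsub : ∀ A B : Finset U, f A + f B ≥ f (A ∪ B) + f (A ∩ B)) :
    gfun c f ∅ = 0 ∧
    (∀ A B : Finset U, A ⊆ B → gfun c f A ≤ gfun c f B) ∧
    (∀ A B : Finset U, gfun c f A + gfun c f B ≥ gfun c f (A ∪ B) + gfun c f (A ∩ B)) := by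
  have hint : ∀ A : Finset U,
      IntervalIntegrable (fun p => SubAux.w c p * SubAux.Q f A p) MeasureTheory.volume 0 1 :=
    fun A => (SubAux.contQ f A).intervalIntegrable 0 1
  refine ⟨?_, ?_, ?_⟩
  · simp [gfun, hnorm]
  · intro A B hAB
    rw [SubAux.gfun_eq c f hnorm, SubAux.gfun_eq c f hnorm]
    apply intervalIntegral.integral_mono_on (by norm_num) (hint A) (hint B)
    intro p hp
    exact mul_le_mul_of_nonneg_left (SubAux.Q_mono hp f hnorm hmono hAB)
      (SubAux.w_nonneg hc0 p)
  · intro A B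
    rw [ge_iff_le, SubAux.gfun_eq c f hnorm, SubAux.gfun_eq c f hnorm,
      SubAux.gfun_eq c f hnorm, SubAux.gfun_eq c f hnorm,
      ← intervalIntegral.integral_add (hint _) (hint _),
      ← intervalIntegral.integral_add (hint _) (hint _)]
    apply intervalIntegral.integral_mono_on (by norm_num) ((hint _).add (hint _))
      ((hint _).add (hint _))
    intro p hp
    simp only [← mul_add]
    exact mul_le_mul_of_nonneg_left (SubAux.Q_sub hp f hnorm hsub A B)
      (SubAux.w_nonneg hc0 p)
end

section
/- If f : 2^U → ℝ is normalized, monotone, submodular, and has curvature at most c, then g(A) = ∑_{B ⊆ A} m_{|A|−1,|B|−1} f(B) also has curvature at most c, i.e., g(A + x) − g(A) ≥ (1−c)·g({x}) for all A and x ∉ A. -/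
open MeasureTheory Real Finset

/-!
The coefficients `m_{a,b}` are the moments `∫ w(p) p^b (1-p)^(a-b) dp` of the probability density
`w(p) = c e^{cp} / (e^c - 1)` on `[0, 1]`, so they obey Pascal's rule
`m_{a+1,b} + m_{a+1,b+1} = m_{a,b}`, and `∑_{B ⊆ A} m_{|A|,|B|} = ∫ w (p + (1 - p))^{|A|} = 1`.
Pascal's rule turns the marginal gain of `g` into the average
`g(A + x) - g(A) = ∑_{B ⊆ A} m_{|A|,|B|} (f(B + x) - f(B))`
of marginal gains of `f`, each of which is at least `(1 - c) f({x}) = (1 - c) g({x})`.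
-/

noncomputable def mcoefDensity (c p : ℝ) : ℝ := c * exp (c * p) / (exp c - 1)

lemma continuous_mcoefDensity (c : ℝ) : Continuous (mcoefDensity c) := by
  unfold mcoefDensity
  fun_prop

lemma mcoefDensity_nonneg (c p : ℝ) : 0 ≤ mcoefDensity c p := by
  rw [mcoefDensity, mul_div_right_comm]
  refine mul_nonneg ?_ (exp_pos _).le
  rcases lt_trichotomy c 0 with hc | rfl | hc
  · exact div_nonneg_of_nonpos hc.le (by linarith [exp_lt_one_iff.mpr hc])
  · simp
  · exact div_nonneg hc.le (by linarith [one_lt_exp_iff.mpr hc])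

lemma integral_mcoefDensity {c : ℝ} (hc : c ≠ 0) : ∫ p in (0:ℝ)..1, mcoefDensity c p = 1 := by
  have hexp : exp c - 1 ≠ 0 := sub_ne_zero.mpr (by simpa using hc)
  simp only [mcoefDensity, intervalIntegral.integral_div, intervalIntegral.integral_const_mul,
    intervalIntegral.mul_integral_comp_mul_left, mul_zero, mul_one, integral_exp, exp_zero]
  exact div_self hexp

lemma intervalIntegrable_mcoefDensity_mul (c : ℝ) (i j : ℕ) :
    IntervalIntegrable (fun p => mcoefDensity c p * p ^ i * (1 - p) ^ j) volume 0 1 := by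
  have := continuous_mcoefDensity c
  exact Continuous.intervalIntegrable (by fun_prop) 0 1

lemma mcoef_natCast (c : ℝ) (a b : ℕ) :
    mcoef c a b = ∫ p in (0:ℝ)..1, mcoefDensity c p * p ^ b * (1 - p) ^ (a - b) := by
  rw [mcoef, if_neg (by omega)]
  simp [mcoefDensity]

lemma mcoef_nonneg (c : ℝ) (a b : ℤ) : 0 ≤ mcoef c a b := by
  unfold mcoef
  split_ifs
  · exact le_rfl
  · refine intervalIntegral.integral_nonneg zero_le_one fun p hp => ?_
    show 0 ≤ mcoefDensity c p * _ * _
    exact mul_nonneg (mul_nonneg (mcoefDensity_nonneg c p) (pow_nonneg hp.1 _))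
      (pow_nonneg (by linarith [hp.2]) _)

lemma mcoef_zero_zero {c : ℝ} (hc : c ≠ 0) : mcoef c 0 0 = 1 := by
  rw [← Nat.cast_zero, mcoef_natCast]
  simpa using integral_mcoefDensity hc

/-- Pascal's rule for the coefficients, from `p ^ i (1 - p) ^ (j + 1) + p ^ (i + 1) (1 - p) ^ j
= p ^ i (1 - p) ^ j`. -/
lemma mcoef_add_mcoef_succ (c : ℝ) (i j : ℕ) :
    mcoef c (i + j + 1 : ℕ) i + mcoef c (i + j + 1 : ℕ) (i + 1 : ℕ) = mcoef c (i + j : ℕ) i := by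
  simp only [mcoef_natCast, show i + j + 1 - i = j + 1 by omega,
    show i + j + 1 - (i + 1) = j by omega, show i + j - i = j by omega]
  rw [← intervalIntegral.integral_add (intervalIntegrable_mcoefDensity_mul c i (j + 1))
    (intervalIntegrable_mcoefDensity_mul c (i + 1) j)]
  congr 1
  funext p
  ring

lemma sum_powerset_mcoef {ι : Type*} {c : ℝ} (hc : c ≠ 0) (A : Finset ι) :
    ∑ B ∈ A.powerset, mcoef c #A #B = 1 := by
  simp_rw [mcoef_natCast]
  rw [← intervalIntegral.integral_finsetSum fun B _ =>
    intervalIntegrable_mcoefDensity_mul c _ _]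
  simp_rw [mul_assoc, ← mul_sum, sum_pow_mul_eq_add_pow, add_sub_cancel, one_pow, mul_one]
  exact integral_mcoefDensity hc

lemma mcoef_sub_mcoef_pred (c : ℝ) {a k : ℕ} (hk : 1 ≤ k) (hka : k ≤ a) :
    mcoef c a ((k : ℤ) - 1) - mcoef c ((a : ℤ) - 1) ((k : ℤ) - 1) = -mcoef c a k := by
  obtain ⟨i, rfl⟩ : ∃ i, k = i + 1 := ⟨k - 1, by omega⟩
  obtain ⟨j, rfl⟩ : ∃ j, a = i + j + 1 := ⟨a - (i + 1), by omega⟩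
  have hi : ((i + 1 : ℕ) : ℤ) - 1 = (i : ℕ) := by push_cast; ring
  have hij : ((i + j + 1 : ℕ) : ℤ) - 1 = (i + j : ℕ) := by push_cast; ring
  rw [hi, hij]
  linarith [mcoef_add_mcoef_succ c i j]

section gfun

variable {U : Type*} [DecidableEq U] {f : Finset U → ℝ}

lemma gfun_singleton {c : ℝ} (hc : c ≠ 0) (hf : f ∅ = 0) (x : U) : gfun c f {x} = f {x} := by
  rw [gfun, show ({x} : Finset U).powerset = {∅, {x}} from rfl,
    sum_pair (singleton_ne_empty x).symm]
  simp [hf, mcoef_zero_zero hc]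

lemma gfun_insert_sub_gfun (c : ℝ) (hf : f ∅ = 0) {A : Finset U} {x : U} (hx : x ∉ A) :
    gfun c f (insert x A) - gfun c f A
      = ∑ B ∈ A.powerset, mcoef c #A #B * (f (insert x B) - f B) := by
  have hcard : ∀ B ∈ A.powerset, #(insert x B) = #B + 1 := fun B hB =>
    card_insert_of_notMem fun h => hx (mem_powerset.mp hB h)
  have hcoef : ∀ B ∈ A.powerset,
      (mcoef c #A ((#B : ℤ) - 1) - mcoef c ((#A : ℤ) - 1) ((#B : ℤ) - 1)) * f B
        = -mcoef c #A #B * f B := by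
    intro B hB
    rcases B.eq_empty_or_nonempty with rfl | hB0
    · simp [hf]
    · rw [mcoef_sub_mcoef_pred c (one_le_card.mpr hB0) (card_le_card (mem_powerset.mp hB))]
  rw [gfun, gfun, sum_powerset_insert hx, card_insert_of_notMem hx, Nat.cast_succ,
    add_sub_cancel_right, add_sub_right_comm, ← sum_sub_distrib, ← sum_add_distrib]
  refine sum_congr rfl fun B hB => ?_
  rw [← sub_mul, hcoef B hB, hcard B hB, Nat.cast_succ, add_sub_cancel_right]
  ring

end gfun

theorem stmt_8_general (c : ℝ) (hc0 : 0 < c) {U : Type*} [DecidableEq U]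
    (f : Finset U → ℝ)
    (hnorm : f ∅ = 0)
    (hcurv : ∀ (A : Finset U) (x : U), x ∉ A →
      f (insert x A) - f A ≥ (1 - c) * f {x}) :
    ∀ (A : Finset U) (x : U), x ∉ A →
      gfun c f (insert x A) - gfun c f A ≥ (1 - c) * gfun c f {x} := by
  intro A x hx
  rw [gfun_insert_sub_gfun c hnorm hx, gfun_singleton hc0.ne' hnorm]
  calc (1 - c) * f {x} = ∑ B ∈ A.powerset, mcoef c #A #B * ((1 - c) * f {x}) := by
        rw [← sum_mul, sum_powerset_mcoef hc0.ne', one_mul]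
    _ ≤ ∑ B ∈ A.powerset, mcoef c #A #B * (f (insert x B) - f B) :=
        sum_le_sum fun B hB => mul_le_mul_of_nonneg_left
          (hcurv B x fun h => hx (mem_powerset.mp hB h)) (mcoef_nonneg c _ _)

theorem stmt_8 (c : ℝ) (hc0 : 0 < c) (hc1 : c ≤ 1) {U : Type*} [Fintype U] [DecidableEq U]
    (f : Finset U → ℝ)
    (hnorm : f ∅ = 0)
    (hmono : ∀ A B : Finset U, A ⊆ B → f A ≤ f B)
    (hsub : ∀ A B : Finset U, f A + f B ≥ f (A ∪ B) + f (A ∩ B))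
    (hcurv : ∀ (A : Finset U) (x : U), x ∉ A →
      f (insert x A) - f A ≥ (1 - c) * f {x}) :
    ∀ (A : Finset U) (x : U), x ∉ A →
      gfun c f (insert x A) - gfun c f A ≥ (1 - c) * gfun c f {x} :=
  stmt_8_general c hc0 f hnorm hcurv
end

section
/- Let f be a normalized monotone submodular function on U with curvature at most c, let B = {b_1,…,b_r} ⊆ U, and let T ⊆ U. Then ∑_{i=1}^r [f((T − b_i) + b_i) − f(T − b_i)] ≥ f(B) − c·f(T), i.e., ∑_{i=1}^r f_{T−b_i}(b_i) ≥ f(B) − c f(T). -/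
private lemma sumA {U : Type*} [DecidableEq U] (f : Finset U → ℝ)
    (hsub : ∀ A B : Finset U, f A + f B ≥ f (A ∪ B) + f (A ∩ B)) :
    ∀ (S T : Finset U), ∑ x ∈ S, (f (insert x T) - f T) ≥ f (S ∪ T) - f T := by
  intro S
  induction S using Finset.induction_on with
  | empty => intro T; simp
  | @insert a S' ha ih =>
    intro T
    rw [Finset.sum_insert ha]
    have h1 := ih T
    have key : f (insert a T) - f T ≥ f (insert a (S' ∪ T)) - f (S' ∪ T) := by
      by_cases haT : a ∈ T
      · have : insert a T = T := Finset.insert_eq_self.2 haT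
        rw [this]
        have : insert a (S' ∪ T) = S' ∪ T := Finset.insert_eq_self.2 (Finset.mem_union_right _ haT)
        rw [this]
        linarith
      · have h2 := hsub (insert a T) (S' ∪ T)
        have hu : insert a T ∪ (S' ∪ T) = insert a (S' ∪ T) := by
          ext x; simp [Finset.mem_union, Finset.mem_insert]; tauto
        have hi : insert a T ∩ (S' ∪ T) = T := by
          ext x
          simp only [Finset.mem_inter, Finset.mem_insert, Finset.mem_union]
          constructor
          · rintro ⟨h | h, h2 | h2⟩ <;> first | assumption | (subst h; tauto)
          · intro h; exact ⟨Or.inr h, Or.inr h⟩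
        rw [hu, hi] at h2
        linarith
    have : insert a S' ∪ T = insert a (S' ∪ T) := Finset.insert_union a S' T
    rw [this]
    linarith

private lemma sumB {U : Type*} [DecidableEq U] (f : Finset U → ℝ)
    (hnorm : f ∅ = 0)
    (hmono : ∀ A B : Finset U, A ⊆ B → f A ≤ f B)
    (hsub : ∀ A B : Finset U, f A + f B ≥ f (A ∪ B) + f (A ∩ B)) :
    ∀ (S : Finset U), ∑ x ∈ S, f {x} ≥ f S := by
  intro S
  induction S using Finset.induction_on with
  | empty => simp [hnorm]
  | @insert a S' ha ih =>
    rw [Finset.sum_insert ha]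
    have h2 := hsub {a} S'
    have hu : {a} ∪ S' = insert a S' := by ext y; simp
    have hge : f ({a} ∩ S') ≥ 0 := by
      have := hmono ∅ ({a} ∩ S') (Finset.empty_subset _)
      linarith
    rw [hu] at h2
    linarith

theorem stmt_11 (c : ℝ) (hc0 : 0 < c) (hc1 : c ≤ 1) {U : Type*} [DecidableEq U]
    (f : Finset U → ℝ)
    (hnorm : f ∅ = 0)
    (hmono : ∀ A B : Finset U, A ⊆ B → f A ≤ f B)
    (hsub : ∀ A B : Finset U, f A + f B ≥ f (A ∪ B) + f (A ∩ B))
    (hcurv : ∀ X Y : Finset U, Disjoint X Y → f (X ∪ Y) ≥ f X + (1 - c) * f Y)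
    (r : ℕ) (b : Fin r → U) (hb : Function.Injective b)
    (T : Finset U) :
    ∑ i : Fin r, (f (insert (b i) (T.erase (b i))) - f (T.erase (b i))) ≥
      f (Finset.image b Finset.univ) - c * f T := by
  set B := Finset.image b Finset.univ with hB
  set g : U → ℝ := fun x => f (insert x (T.erase x)) - f (T.erase x) with hg
  have hsum : ∑ i : Fin r, (f (insert (b i) (T.erase (b i))) - f (T.erase (b i)))
      = ∑ x ∈ B, g x := by
    rw [hB, Finset.sum_image (fun i _ j _ h => hb h)]
  rw [hsum]
  have hsplit : ∑ x ∈ B ∩ T, g x + ∑ x ∈ B \ T, g x = ∑ x ∈ B, g x :=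
    Finset.sum_inter_add_sum_sdiff B T g
  -- part 1: over B ∩ T
  have h1 : ∑ x ∈ B ∩ T, g x ≥ (1 - c) * f (B ∩ T) := by
    have step : ∀ x ∈ B ∩ T, g x ≥ (1 - c) * f {x} := by
      intro x hx
      have hxT : x ∈ T := (Finset.mem_inter.1 hx).2
      have hd : Disjoint (T.erase x) {x} := by
        simp [Finset.disjoint_singleton_right]
      have := hcurv (T.erase x) {x} hd
      have he : T.erase x ∪ {x} = insert x (T.erase x) := by ext y; simp
      rw [he] at this
      simp only [hg]
      linarith
    calc ∑ x ∈ B ∩ T, g x ≥ ∑ x ∈ B ∩ T, (1 - c) * f {x} :=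
          Finset.sum_le_sum step
      _ = (1 - c) * ∑ x ∈ B ∩ T, f {x} := by rw [Finset.mul_sum]
      _ ≥ (1 - c) * f (B ∩ T) := by
          have := sumB f hnorm hmono hsub (B ∩ T)
          nlinarith
  -- part 2: over B \ T
  have h2 : ∑ x ∈ B \ T, g x ≥ f (B ∪ T) - f T := by
    have heq : ∀ x ∈ B \ T, g x = f (insert x T) - f T := by
      intro x hx
      have hxT : x ∉ T := (Finset.mem_sdiff.1 hx).2
      simp [hg, Finset.erase_eq_of_notMem hxT]
    rw [Finset.sum_congr rfl heq]
    have := sumA f hsub (B \ T) T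
    rwa [Finset.sdiff_union_self_eq_union] at this
  -- curvature: f(B ∪ T) ≥ f B + (1-c) f(T \ B)
  have h3 : f (B ∪ T) ≥ f B + (1 - c) * f (T \ B) := by
    have hd : Disjoint B (T \ B) := Finset.disjoint_sdiff
    have := hcurv B (T \ B) hd
    rwa [Finset.union_sdiff_self_eq_union] at this
  -- subadditivity: f(T \ B) + f(B ∩ T) ≥ f T
  have h4 : f (T \ B) + f (B ∩ T) ≥ f T := by
    have := hsub (T \ B) (B ∩ T)
    have hu : T \ B ∪ B ∩ T = T := by ext y; simp; tauto
    have hi : (T \ B) ∩ (B ∩ T) = ∅ := by ext y; simp; tauto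
    rw [hu, hi, hnorm] at this
    linarith
  have h5 : (1 - c) * (f (T \ B) + f (B ∩ T)) ≥ (1 - c) * f T :=
    mul_le_mul_of_nonneg_left h4 (by linarith)
  have h6 : (1 - c) * (f (T \ B) + f (B ∩ T)) = (1 - c) * f (T \ B) + (1 - c) * f (B ∩ T) := by
    ring
  have h7 : (1 - c) * f T = f T - c * f T := by ring
  linarith
end

section
/- For any finite set A, any subset A' ⊆ A, and any integer 0 ≤ j ≤ |A'|, the identity ∑_{B ⊆ A, |B ∩ A'| = j} m_{|A|,|B|} equals ∑_{B' ⊆ A', |B'| = j} ∑_{C ⊆ A \ A'} m_{|A|, j + |C|}; consequently, if B is drawn with probability m_{|A|,|B|} from subsets of A, then B ∩ A' is drawn with probability m_{|A'|,|B ∩ A'|} from subsets of A': that is, for every B' ⊆ A', ∑_{C ⊆ A \ A'} m_{|A|, |B'| + |C|} = m_{|A'|, |B'|}. -/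
open MeasureTheory Real Finset

lemma mcoef_nat (c : ℝ) (a b : ℕ) (hb : b ≤ a) :
    mcoef c (a : ℤ) (b : ℤ) =
      ∫ p in (0:ℝ)..1,
        (c * Real.exp (c * p) / (Real.exp c - 1)) * p ^ b * (1 - p) ^ (a - b) := by
  rw [mcoef, if_neg (by push_neg; constructor <;> positivity)]
  have h1 : ((b : ℤ)).toNat = b := Int.toNat_natCast b
  have h2 : ((a : ℤ) - (b : ℤ)).toNat = a - b := by
    rw [← Nat.cast_sub hb, Int.toNat_natCast]
  rw [h1, h2]

lemma mkey (c : ℝ) (hc0 : 0 < c) (a' n b : ℕ) (hb : b ≤ a') :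
    ∑ k ∈ Finset.range (n + 1),
        ((n.choose k : ℝ) * mcoef c ((a' + n : ℕ) : ℤ) ((b + k : ℕ) : ℤ)) =
      mcoef c (a' : ℤ) (b : ℤ) := by
  have hsum : ∀ k ∈ Finset.range (n + 1),
      (n.choose k : ℝ) * mcoef c ((a' + n : ℕ) : ℤ) ((b + k : ℕ) : ℤ) =
      ∫ p in (0:ℝ)..1, (n.choose k : ℝ) *
        ((c * Real.exp (c * p) / (Real.exp c - 1)) * p ^ (b + k) *
          (1 - p) ^ (a' + n - (b + k))) := by
    intro k hk
    rw [Finset.mem_range] at hk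
    rw [mcoef_nat c _ _ (by omega), ← intervalIntegral.integral_const_mul]
  rw [Finset.sum_congr rfl hsum, ← intervalIntegral.integral_finset_sum]
  · rw [mcoef_nat c a' b hb]
    apply intervalIntegral.integral_congr
    intro p _
    dsimp only
    have : ∑ k ∈ Finset.range (n + 1), (n.choose k : ℝ) *
        ((c * Real.exp (c * p) / (Real.exp c - 1)) * p ^ (b + k) *
          (1 - p) ^ (a' + n - (b + k))) =
        (c * Real.exp (c * p) / (Real.exp c - 1)) * p ^ b * (1 - p) ^ (a' - b) *
          ∑ k ∈ Finset.range (n + 1), p ^ k * (1 - p) ^ (n - k) * (n.choose k : ℝ) := by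
      rw [Finset.mul_sum]
      apply Finset.sum_congr rfl
      intro k hk
      rw [Finset.mem_range] at hk
      have h1 : a' + n - (b + k) = (a' - b) + (n - k) := by omega
      rw [h1, pow_add, pow_add]
      ring
    rw [this, ← Commute.add_pow (Commute.all _ _) n]
    have : p + (1 - p) = 1 := by ring
    rw [this, one_pow, mul_one]
  · intro k hk
    apply Continuous.intervalIntegrable
    have hne : Real.exp c - 1 ≠ 0 := by
      have h1 : (1 : ℝ) < Real.exp c := by
        rw [← Real.exp_zero]; exact Real.exp_lt_exp.2 hc0
      exact sub_ne_zero.2 (ne_of_gt h1)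
    fun_prop (disch := intros; exact hne)

theorem stmt_14 (c : ℝ) (hc0 : 0 < c) (hc1 : c ≤ 1) {α : Type*} [DecidableEq α]
    (A A' : Finset α) (hA' : A' ⊆ A) :
    (∀ j : ℕ, j ≤ A'.card →
      ∑ B ∈ A.powerset.filter (fun B => (B ∩ A').card = j),
          mcoef c (A.card : ℤ) (B.card : ℤ) =
        ∑ B' ∈ A'.powerset.filter (fun B' => B'.card = j),
          ∑ C ∈ (A \ A').powerset, mcoef c (A.card : ℤ) ((j : ℤ) + (C.card : ℤ))) ∧
    (∀ B' : Finset α, B' ⊆ A' →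
      ∑ C ∈ (A \ A').powerset, mcoef c (A.card : ℤ) ((B'.card : ℤ) + (C.card : ℤ)) =
        mcoef c (A'.card : ℤ) (B'.card : ℤ)) := by
  constructor
  · intro j hj
    rw [← Finset.sum_product']
    apply Finset.sum_bij' (fun B _ => ((B ∩ A', B \ A') : Finset α × Finset α))
      (fun x _ => x.1 ∪ x.2)
    · intro B hB
      simp only [Finset.mem_filter, Finset.mem_powerset] at hB
      simp only [Finset.mem_product, Finset.mem_filter, Finset.mem_powerset]
      exact ⟨⟨Finset.inter_subset_right, hB.2⟩,
        fun x hx => Finset.mem_sdiff.2 ⟨hB.1 (Finset.mem_sdiff.1 hx).1, (Finset.mem_sdiff.1 hx).2⟩⟩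
    · intro x hx
      simp only [Finset.mem_product, Finset.mem_filter, Finset.mem_powerset] at hx
      simp only [Finset.mem_filter, Finset.mem_powerset]
      have h1 : x.1 ⊆ A := hx.1.1.trans hA'
      have h2 : x.2 ⊆ A := hx.2.trans (Finset.sdiff_subset)
      refine ⟨Finset.union_subset h1 h2, ?_⟩
      have : (x.1 ∪ x.2) ∩ A' = x.1 := by
        rw [Finset.union_inter_distrib_right,
          Finset.inter_eq_left.2 hx.1.1]
        have : x.2 ∩ A' = ∅ := by
          rw [Finset.eq_empty_iff_forall_notMem]
          intro a ha
          have := hx.2 (Finset.mem_inter.1 ha).1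
          exact (Finset.mem_sdiff.1 this).2 (Finset.mem_inter.1 ha).2
        rw [this, Finset.union_empty]
      rw [this, hx.1.2]
    · intro B hB
      simp only [Finset.mem_filter, Finset.mem_powerset] at hB
      ext a
      simp only [Finset.mem_union, Finset.mem_inter, Finset.mem_sdiff]
      tauto
    · intro x hx
      simp only [Finset.mem_product, Finset.mem_filter, Finset.mem_powerset] at hx
      have hd : x.2 ∩ A' = ∅ := by
        rw [Finset.eq_empty_iff_forall_notMem]
        intro a ha
        have := hx.2 (Finset.mem_inter.1 ha).1
        exact (Finset.mem_sdiff.1 this).2 (Finset.mem_inter.1 ha).2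
      have h1 : (x.1 ∪ x.2) ∩ A' = x.1 := by
        rw [Finset.union_inter_distrib_right, Finset.inter_eq_left.2 hx.1.1, hd,
          Finset.union_empty]
      have h2 : (x.1 ∪ x.2) \ A' = x.2 := by
        ext a
        simp only [Finset.mem_sdiff, Finset.mem_union]
        constructor
        · rintro ⟨(h | h), hn⟩
          · exact absurd (hx.1.1 h) hn
          · exact h
        · intro h
          refine ⟨Or.inr h, fun hn => ?_⟩
          have := hx.2 h
          exact (Finset.mem_sdiff.1 this).2 hn
      exact Prod.ext h1 h2
    · intro B hB
      simp only [Finset.mem_filter, Finset.mem_powerset] at hB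
      have hdisj : Disjoint (B ∩ A') (B \ A') := by
        apply Finset.disjoint_left.2
        intro a ha hb
        exact (Finset.mem_sdiff.1 hb).2 (Finset.mem_inter.1 ha).2
      have hunion : (B ∩ A') ∪ (B \ A') = B := by
        ext a
        simp only [Finset.mem_union, Finset.mem_inter, Finset.mem_sdiff]
        tauto
      have hcard : (B.card : ℤ) = (j : ℤ) + ((B \ A').card : ℤ) := by
        have : B.card = j + (B \ A').card := by
          conv_lhs => rw [← hunion]
          rw [Finset.card_union_of_disjoint hdisj, hB.2]
        exact_mod_cast this
      rw [hcard]
  · intro B' hB'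
    have hle : A'.card ≤ A.card := Finset.card_le_card hA'
    have hcards : A.card = A'.card + (A \ A').card := by
      rw [Finset.card_sdiff_of_subset hA']
      omega
    have hb : B'.card ≤ A'.card := Finset.card_le_card hB'
    have key := mkey c hc0 A'.card (A \ A').card B'.card hb
    rw [← key, ← hcards]
    rw [Finset.sum_powerset_apply_card (fun k => mcoef c (A.card : ℤ) ((B'.card : ℤ) + (k : ℤ)))]
    apply Finset.sum_congr rfl
    intro k hk
    have hc : ((B'.card + k : ℕ) : ℤ) = (B'.card : ℤ) + (k : ℤ) := by push_cast; ring
    rw [nsmul_eq_mul, hc]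
end

section
/- For a weighted coverage function f(A) = w(⋃_{a∈A} U_a), the auxiliary function g(A) = ∑_{B ⊆ A} m_{|A|−1,|B|−1} f(B) satisfies g(A) = ∑_{x ∈ X} ℓ_{|A[x]|} · w(x), where A[x] = {a ∈ A : x ∈ U_a} and ℓ_k = ∫₀¹ (c e^{cp}/(e^c−1)) (1 − (1−p)^k)/p dp. -/
open MeasureTheory Real Finset

noncomputable def ell (c : ℝ) (k : ℕ) : ℝ :=
  ∫ p in (0:ℝ)..1, (c * Real.exp (c * p) / (Real.exp c - 1)) * ((1 - (1 - p) ^ k) / p)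


lemma sum_powerset_pow {U : Type*} [DecidableEq U] (s : Finset U) (p : ℝ) :
    ∑ B ∈ s.powerset, p ^ B.card * (1 - p) ^ (s.card - B.card) = 1 := by
  have h := Finset.prod_add (fun _ : U => p) (fun _ : U => 1 - p) s
  simp only [add_sub_cancel, Finset.prod_const, Finset.prod_const_one, one_pow] at h
  conv_rhs => rw [h]
  refine Finset.sum_congr rfl fun B hB => ?_
  rw [Finset.card_sdiff_of_subset (Finset.mem_powerset.mp hB)]

lemma key_comb {U : Type*} [DecidableEq U] (A S : Finset U) (hS : S ⊆ A) (p : ℝ) :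
    ∑ B ∈ A.powerset, (if (B ∩ S).Nonempty then p ^ B.card * (1 - p) ^ (A.card - B.card) else 0)
      = 1 - (1 - p) ^ S.card := by
  classical
  have hsplit : ∑ B ∈ A.powerset,
        (if (B ∩ S).Nonempty then p ^ B.card * (1 - p) ^ (A.card - B.card) else 0)
      = (∑ B ∈ A.powerset, p ^ B.card * (1 - p) ^ (A.card - B.card))
        - ∑ B ∈ A.powerset, (if Disjoint B S then p ^ B.card * (1 - p) ^ (A.card - B.card) else 0) := by
    rw [← Finset.sum_sub_distrib]
    refine Finset.sum_congr rfl fun B _ => ?_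
    by_cases h : (B ∩ S).Nonempty
    · rw [if_pos h, if_neg (Finset.not_disjoint_iff_nonempty_inter.mpr h), sub_zero]
    · rw [if_neg h, if_pos (Finset.disjoint_iff_inter_eq_empty.mpr
          (Finset.not_nonempty_iff_eq_empty.mp h)), sub_self]
  rw [hsplit, sum_powerset_pow]
  congr 1
  rw [← Finset.sum_filter]
  have hset : A.powerset.filter (fun B => Disjoint B S) = (A \ S).powerset := by
    ext B
    simp [Finset.mem_powerset, Finset.subset_sdiff]
  rw [hset]
  have hcard : (A \ S).card + S.card = A.card := Finset.card_sdiff_add_card_eq_card hS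
  calc ∑ B ∈ (A \ S).powerset, p ^ B.card * (1 - p) ^ (A.card - B.card)
      = ∑ B ∈ (A \ S).powerset, (p ^ B.card * (1 - p) ^ ((A \ S).card - B.card)) * (1 - p) ^ S.card := by
        refine Finset.sum_congr rfl fun B hB => ?_
        have hBle : B.card ≤ (A \ S).card := Finset.card_le_card (Finset.mem_powerset.mp hB)
        rw [mul_assoc, ← pow_add]
        congr 2
        omega
    _ = (1 - p) ^ S.card := by rw [← Finset.sum_mul, sum_powerset_pow, one_mul]

lemma phi_cont (c : ℝ) :
    Continuous (fun p : ℝ => c * Real.exp (c * p) / (Real.exp c - 1)) :=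
  (continuous_const.mul (Real.continuous_exp.comp (continuous_const.mul continuous_id))).div_const _

lemma perx (c : ℝ) {U : Type*} [DecidableEq U] (A S : Finset U) (hS : S ⊆ A) :
    ∑ B ∈ A.powerset,
        (if (B ∩ S).Nonempty then mcoef c ((A.card : ℤ) - 1) ((B.card : ℤ) - 1) else 0)
      = ell c S.card := by
  classical
  set φ : ℝ → ℝ := fun p => c * Real.exp (c * p) / (Real.exp c - 1) with hφ
  set F : Finset U → ℝ → ℝ := fun B p =>
    if (B ∩ S).Nonempty then φ p * (p ^ (B.card - 1) * (1 - p) ^ (A.card - B.card)) else 0 with hF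
  have hstep1 : ∀ B ∈ A.powerset,
      (if (B ∩ S).Nonempty then mcoef c ((A.card : ℤ) - 1) ((B.card : ℤ) - 1) else 0)
        = ∫ p in (0:ℝ)..1, F B p := by
    intro B hB
    by_cases h : (B ∩ S).Nonempty
    · have hB1 : 1 ≤ B.card := Finset.card_pos.mpr (h.mono Finset.inter_subset_left)
      have hBA : B.card ≤ A.card := Finset.card_le_card (Finset.mem_powerset.mp hB)
      rw [if_pos h, mcoef, if_neg (by omega)]
      have e1 : (((B.card : ℤ) - 1)).toNat = B.card - 1 := by omega
      have e2 : (((A.card : ℤ) - 1) - ((B.card : ℤ) - 1)).toNat = A.card - B.card := by omega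
      rw [e1, e2]
      refine intervalIntegral.integral_congr fun p _ => ?_
      simp only [hF, if_pos h, hφ]
      ring
    · simp [hF, h]
  rw [Finset.sum_congr rfl hstep1]
  have hInt : ∀ B ∈ A.powerset, IntervalIntegrable (F B) MeasureTheory.volume 0 1 := by
    intro B _
    by_cases h : (B ∩ S).Nonempty
    · have : F B = fun p => φ p * (p ^ (B.card - 1) * (1 - p) ^ (A.card - B.card)) := by
        funext p; simp [hF, h]
      rw [this]
      exact (((phi_cont c).mul ((continuous_pow _).mul
        ((continuous_const.sub continuous_id).pow _)))).intervalIntegrable 0 1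
    · have : F B = fun _ => (0:ℝ) := by funext p; simp [hF, h]
      rw [this]; simp [intervalIntegrable_const]
  rw [← intervalIntegral.integral_finset_sum hInt]
  rw [ell]
  refine intervalIntegral.integral_congr_ae ?_
  refine Filter.Eventually.of_forall fun p hp => ?_
  rw [Set.uIoc_of_le (by norm_num : (0:ℝ) ≤ 1)] at hp
  have hp0 : p ≠ 0 := ne_of_gt hp.1
  have hpull : ∑ B ∈ A.powerset, F B p
      = φ p * ∑ B ∈ A.powerset,
          (if (B ∩ S).Nonempty then p ^ (B.card - 1) * (1 - p) ^ (A.card - B.card) else 0) := by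
    rw [Finset.mul_sum]
    refine Finset.sum_congr rfl fun B _ => ?_
    by_cases h : (B ∩ S).Nonempty <;> simp [hF, h]
  rw [hpull]
  congr 1
  rw [eq_div_iff hp0]
  rw [Finset.sum_mul]
  rw [← key_comb A S hS p]
  refine Finset.sum_congr rfl fun B _ => ?_
  by_cases h : (B ∩ S).Nonempty
  · have hB1 : 1 ≤ B.card := Finset.card_pos.mpr (h.mono Finset.inter_subset_left)
    rw [if_pos h, if_pos h]
    have : p ^ (B.card - 1) * p = p ^ B.card := by
      rw [← pow_succ]; congr 1; omega
    calc p ^ (B.card - 1) * (1 - p) ^ (A.card - B.card) * p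
        = (p ^ (B.card - 1) * p) * (1 - p) ^ (A.card - B.card) := by ring
      _ = p ^ B.card * (1 - p) ^ (A.card - B.card) := by rw [this]
  · simp [h]


theorem stmt_18 (c : ℝ) (hc0 : 0 < c) (hc1 : c ≤ 1)
    {X U : Type*} [Fintype X] [DecidableEq X] [Fintype U] [DecidableEq U]
    (w : X → ℝ) (hw : ∀ x, 0 ≤ w x)
    (Uset : U → Finset X)
    (f : Finset U → ℝ)
    (hf : ∀ A : Finset U, f A = ∑ x ∈ A.biUnion Uset, w x)
    (A : Finset U) :
    gfun c f A =
      ∑ x : X, ell c ((A.filter (fun a => x ∈ Uset a)).card) * w x := by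
  classical
  have step1 : gfun c f A
      = ∑ B ∈ A.powerset, ∑ x : X,
          (if (B ∩ A.filter (fun a => x ∈ Uset a)).Nonempty
            then mcoef c ((A.card : ℤ) - 1) ((B.card : ℤ) - 1) else 0) * w x := by
    rw [gfun]
    refine Finset.sum_congr rfl fun B hB => ?_
    have hBA : B ⊆ A := Finset.mem_powerset.mp hB
    have hrepr : ∑ x ∈ B.biUnion Uset, w x
        = ∑ x : X, (if x ∈ B.biUnion Uset then w x else 0) := by
      rw [Finset.sum_ite_mem, Finset.univ_inter]
    rw [hf B, hrepr, Finset.mul_sum]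
    refine Finset.sum_congr rfl fun x _ => ?_
    have hmem : x ∈ B.biUnion Uset ↔ (B ∩ A.filter (fun a => x ∈ Uset a)).Nonempty := by
      simp only [Finset.mem_biUnion, Finset.Nonempty, Finset.mem_inter, Finset.mem_filter]
      constructor
      · rintro ⟨a, ha, hx⟩; exact ⟨a, ha, hBA ha, hx⟩
      · rintro ⟨a, ha, _, hx⟩; exact ⟨a, ha, hx⟩
    by_cases h : x ∈ B.biUnion Uset
    · rw [if_pos h, if_pos (hmem.mp h)]
    · rw [if_neg h, if_neg (fun hh => h (hmem.mpr hh)), mul_zero, zero_mul]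
  rw [step1, Finset.sum_comm]
  refine Finset.sum_congr rfl fun x _ => ?_
  rw [← Finset.sum_mul]
  congr 1
  exact perx c A (A.filter (fun a => x ∈ Uset a)) (Finset.filter_subset _ _)
end
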